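/- arXiv:2112.13394 — 2 statements merged into one kernel-verified Lean document; each statement's English description precedes it below -/
import Mathlib

section
/- Let ω be a bounded open connected subset of ℝ² whose closure is compact, and let θ : ℝ² → ℝ³ be of class C² on an open set containing the closure of ω and an immersion. Define Θ(y, x_3) := θ(y) + x_3 a_3(y), where a_3 := (a_1 × a_2)/|a_1 × a_2| and a_α := ∂_αθ. Then there exists ε_0 > 0 such that for every y in the closure of ω and every x_3 ∈ [−ε_0, ε_0], the three vectors g_1(y,x_3) := a_1(y) + x_3 ∂_1 a_3(y), g_2(y,x_3) := a_2(y) + x_3 ∂_2 a_3(y) and g_3(y,x_3) := a_3(y) are linearly independent; equivalently, Θ is an immersion on (closure ω) × [−ε_0, ε_0] and the determinant of the Gram matrix (g_i · g_j) is strictly positive there. -/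
open scoped RealInnerProductSpace

noncomputable section

abbrev E2 : Type := EuclideanSpace ℝ (Fin 2)
abbrev E3 : Type := EuclideanSpace ℝ (Fin 3)

/-- Partial derivative `∂_α f` of an `ℝ³`-valued map on `ℝ²`. -/
def pd (α : Fin 2) (f : E2 → E3) (y : E2) : E3 :=
  fderiv ℝ f y (EuclideanSpace.single α 1)

/-- Partial derivative `∂_α f` of a scalar map on `ℝ²`. -/
def pds (α : Fin 2) (f : E2 → ℝ) (y : E2) : ℝ :=
  fderiv ℝ f y (EuclideanSpace.single α 1)

/-- Cross product in `ℝ³`. -/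
def cross3 (u v : E3) : E3 :=
  (WithLp.equiv 2 (Fin 3 → ℝ)).symm
    ![u 1 * v 2 - u 2 * v 1, u 2 * v 0 - u 0 * v 2, u 0 * v 1 - u 1 * v 0]

/-- The unit normal vector `a₃(y) = (a₁ × a₂)/|a₁ × a₂|` of the surface parametrized by `θ`. -/
def nvec (θ : E2 → E3) (y : E2) : E3 :=
  ‖cross3 (pd 0 θ y) (pd 1 θ y)‖⁻¹ • cross3 (pd 0 θ y) (pd 1 θ y)

/-! At `x₃ = 0` the covariant basis is `(a₁, a₂, a₃)`, which is linearly independent because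
`a₃` is a nonzero normal to the independent pair `a₁, a₂`. Since `θ` is `C²`, `a₃` is `C¹`, so the
basis depends continuously on `(y, x₃)`; linear independence is an open condition, and compactness
of `closure ω` makes the resulting neighbourhoods of `x₃ = 0` uniform in `y`. A family is linearly
independent iff its Gram matrix is positive definite, which gives the determinant. -/

open Filter Topology

theorem linearIndependent_finSnoc_of_forall_inner_eq_zero {𝕜 E : Type*} [RCLike 𝕜]
    [NormedAddCommGroup E] [InnerProductSpace 𝕜 E] {n : ℕ} {v : Fin n → E} {w : E}
    (hv : LinearIndependent 𝕜 v) (hw : w ≠ 0) (horth : ∀ i, inner 𝕜 (v i) w = 0) :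
    LinearIndependent 𝕜 (Fin.snoc v w : Fin (n + 1) → E) := by
  refine linearIndependent_finSnoc.2 ⟨hv, fun hmem => hw ?_⟩
  have hspan : Submodule.span 𝕜 (Set.range v) ≤ (𝕜 ∙ w)ᗮ := by
    rw [Submodule.span_le]
    rintro _ ⟨i, rfl⟩
    exact Submodule.mem_orthogonal_singleton_iff_inner_left.2 (horth i)
  exact inner_self_eq_zero.1 (Submodule.mem_orthogonal_singleton_iff_inner_left.1 (hspan hmem))

theorem IsCompact.exists_forall_Icc_of_forall_eventually {X : Type*} [TopologicalSpace X]
    {K : Set X} (hK : IsCompact K) {P : X × ℝ → Prop} (hP : ∀ x ∈ K, ∀ᶠ p in 𝓝 (x, 0), P p) :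
    ∃ ε > 0, ∀ x ∈ K, ∀ t ∈ Set.Icc (-ε) ε, P (x, t) := by
  have hPK := hK.mem_nhdsSet_prod_of_forall (l := 𝓝 (0 : ℝ)) fun x hx => by
    rw [← nhds_prod_eq]
    exact hP x hx
  obtain ⟨s, hs, t, ht, hst⟩ := Filter.mem_prod_iff.1 hPK
  obtain ⟨ε, hε, hεt⟩ := Metric.nhds_basis_closedBall.mem_iff.1 ht
  refine ⟨ε, hε, fun x hx r hr => hst ⟨subset_of_mem_nhdsSet hs hx, hεt ?_⟩⟩
  rwa [Real.closedBall_eq_Icc, zero_sub, zero_add]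

theorem cross3_eq_crossProduct (u v : E3) :
    cross3 u v = WithLp.toLp 2 (crossProduct u.ofLp v.ofLp) :=
  rfl

theorem cross3_ne_zero_iff {u v : E3} : cross3 u v ≠ 0 ↔ LinearIndependent ℝ ![u, v] := by
  rw [cross3_eq_crossProduct, Ne, WithLp.toLp_eq_zero, ← Ne,
    crossProduct_ne_zero_iff_linearIndependent,
    ← (WithLp.linearEquiv 2 ℝ (Fin 3 → ℝ)).toLinearMap.linearIndependent_iff (LinearEquiv.ker _)]
  congr!
  ext i : 1
  fin_cases i <;> rfl

theorem inner_cross3_left (u v : E3) : ⟪u, cross3 u v⟫ = 0 := by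
  simp [cross3_eq_crossProduct, EuclideanSpace.inner_eq_star_dotProduct, dotProduct_comm]

theorem inner_cross3_right (u v : E3) : ⟪v, cross3 u v⟫ = 0 := by
  simp [cross3_eq_crossProduct, EuclideanSpace.inner_eq_star_dotProduct, dotProduct_comm]

theorem contDiffAt_cross3 {F : Type*} [NormedAddCommGroup F] [NormedSpace ℝ F]
    {n : WithTop ℕ∞} {f g : F → E3} {x : F} (hf : ContDiffAt ℝ n f x) (hg : ContDiffAt ℝ n g x) :
    ContDiffAt ℝ n (fun x => cross3 (f x) (g x)) x := by
  have hfi := contDiffAt_euclidean.1 hf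
  have hgi := contDiffAt_euclidean.1 hg
  refine contDiffAt_euclidean.2 fun i => ?_
  fin_cases i <;> simp <;> exact ((hfi _).mul (hgi _)).sub ((hfi _).mul (hgi _))

theorem contDiffAt_pd {n m : WithTop ℕ∞} {f : E2 → E3} {y : E2} (hf : ContDiffAt ℝ n f y)
    (hmn : m + 1 ≤ n) (α : Fin 2) : ContDiffAt ℝ m (pd α f) y :=
  ((ContinuousLinearMap.apply ℝ E3 (EuclideanSpace.single α 1)).contDiff.comp_contDiffAt y
    (hf.fderiv_right hmn) :)

theorem contDiffAt_nvec {m : WithTop ℕ∞} {θ : E2 → E3} {y : E2} (hθ : ContDiffAt ℝ (m + 1) θ y)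
    (hy : cross3 (pd 0 θ y) (pd 1 θ y) ≠ 0) : ContDiffAt ℝ m (nvec θ) y := by
  have hc := contDiffAt_cross3 (contDiffAt_pd hθ le_rfl 0) (contDiffAt_pd hθ le_rfl 1)
  exact ((hc.norm ℝ hy).inv (norm_ne_zero_iff.2 hy)).smul hc

theorem nvec_ne_zero {θ : E2 → E3} {y : E2} (hy : cross3 (pd 0 θ y) (pd 1 θ y) ≠ 0) :
    nvec θ y ≠ 0 :=
  smul_ne_zero (inv_ne_zero (norm_ne_zero_iff.2 hy)) hy

theorem inner_pd_nvec (θ : E2 → E3) (y : E2) (α : Fin 2) : ⟪pd α θ y, nvec θ y⟫ = 0 := by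
  rw [nvec, real_inner_smul_right, mul_eq_zero]
  right
  fin_cases α
  exacts [inner_cross3_left _ _, inner_cross3_right _ _]

/-- `covariantBasis θ y x₃ i` is `gᵢ(y, x₃) = ∂ᵢΘ(y, x₃)`. -/
def covariantBasis (θ : E2 → E3) (y : E2) (x₃ : ℝ) : Fin 3 → E3 :=
  ![pd 0 θ y + x₃ • pd 0 (nvec θ) y, pd 1 θ y + x₃ • pd 1 (nvec θ) y, nvec θ y]

theorem linearIndependent_covariantBasis_zero {θ : E2 → E3} {y : E2}
    (hy : LinearIndependent ℝ ![pd 0 θ y, pd 1 θ y]) :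
    LinearIndependent ℝ (covariantBasis θ y 0) := by
  have hsnoc : covariantBasis θ y 0 = Fin.snoc ![pd 0 θ y, pd 1 θ y] (nvec θ y) := by
    ext i : 1
    fin_cases i <;> simp [covariantBasis]
  rw [hsnoc]
  exact linearIndependent_finSnoc_of_forall_inner_eq_zero hy
    (nvec_ne_zero (cross3_ne_zero_iff.2 hy)) fun α => by fin_cases α <;> exact inner_pd_nvec θ y _

theorem continuousAt_covariantBasis {θ : E2 → E3} {y : E2} (hθ : ContDiffAt ℝ 2 θ y)
    (hy : cross3 (pd 0 θ y) (pd 1 θ y) ≠ 0) (x₃ : ℝ) :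
    ContinuousAt (fun p : E2 × ℝ => covariantBasis θ p.1 p.2) (y, x₃) := by
  have hn : ContDiffAt ℝ 1 (nvec θ) y := contDiffAt_nvec hθ hy
  have hfst : ∀ {f : E2 → E3}, ContinuousAt f y →
      ContinuousAt (fun p : E2 × ℝ => f p.1) (y, x₃) :=
    fun hf => hf.comp continuousAt_fst
  have hg : ∀ α, ContinuousAt (fun p : E2 × ℝ => pd α θ p.1 + p.2 • pd α (nvec θ) p.1) (y, x₃) :=
    fun α => (hfst (contDiffAt_pd (m := 1) hθ (by norm_num) α).continuousAt).add
      (continuousAt_snd.smul (hfst (contDiffAt_pd (m := 0) hn (by norm_num) α).continuousAt))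
  exact (hg 0).matrixVecCons ((hg 1).matrixVecCons
    ((hfst hn.continuousAt).matrixVecCons continuousAt_const))

theorem shell_covariant_basis_linear_independent_general
    (ω : Set E2) (hω_bdd : Bornology.IsBounded ω)
    (θ : E2 → E3) (U : Set E2) (hU : IsOpen U) (hclU : closure ω ⊆ U)
    (hθ : ContDiffOn ℝ 2 θ U)
    (himm : ∀ y ∈ closure ω, LinearIndependent ℝ ![pd 0 θ y, pd 1 θ y]) :
    ∃ ε₀ : ℝ, 0 < ε₀ ∧ ∀ y ∈ closure ω, ∀ x₃ ∈ Set.Icc (-ε₀) ε₀,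
      LinearIndependent ℝ
        ![pd 0 θ y + x₃ • pd 0 (nvec θ) y,
          pd 1 θ y + x₃ • pd 1 (nvec θ) y, nvec θ y] ∧
      0 < (Matrix.of fun i j : Fin 3 =>
        ⟪![pd 0 θ y + x₃ • pd 0 (nvec θ) y,
            pd 1 θ y + x₃ • pd 1 (nvec θ) y, nvec θ y] i,
          ![pd 0 θ y + x₃ • pd 0 (nvec θ) y,
            pd 1 θ y + x₃ • pd 1 (nvec θ) y, nvec θ y] j⟫).det := by
  have hK : IsCompact (closure ω) := hω_bdd.isCompact_closure
  have hindep : ∀ y ∈ closure ω,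
      ∀ᶠ p in 𝓝 (y, 0), LinearIndependent ℝ (covariantBasis θ p.1 p.2) := fun y hy =>
    continuousAt_covariantBasis (hθ.contDiffAt (hU.mem_nhds (hclU hy)))
      (cross3_ne_zero_iff.2 (himm y hy)) 0
      |>.preimage_mem_nhds (isOpen_setOfPred_linearIndependent.mem_nhds
        (linearIndependent_covariantBasis_zero (himm y hy)))
  obtain ⟨ε, hε, hε_indep⟩ := hK.exists_forall_Icc_of_forall_eventually hindep
  refine ⟨ε, hε, fun y hy x₃ hx₃ => ⟨hε_indep y hy x₃ hx₃, ?_⟩⟩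
  exact (Matrix.posDef_gram_of_linearIndependent (hε_indep y hy x₃ hx₃)).det_pos

/-- for a `C²` immersion `θ` on a neighborhood of the compact closure of the
bounded domain `ω`, there exists `ε₀ > 0` such that for every `y` in the closure of `ω` and
every `x₃ ∈ [−ε₀, ε₀]`, the vectors `gᵢ(y, x₃)` given by `g_α = a_α + x₃ ∂_α a₃` and
`g₃ = a₃` are linearly independent, and the determinant of their Gram matrix is positive. -/
theorem shell_covariant_basis_linear_independent
    (ω : Set E2) (hω_open : IsOpen ω) (hω_bdd : Bornology.IsBounded ω)
    (hω_conn : IsConnected ω)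
    (θ : E2 → E3) (U : Set E2) (hU : IsOpen U) (hclU : closure ω ⊆ U)
    (hθ : ContDiffOn ℝ 2 θ U)
    (himm : ∀ y ∈ closure ω, LinearIndependent ℝ ![pd 0 θ y, pd 1 θ y]) :
    ∃ ε₀ : ℝ, 0 < ε₀ ∧ ∀ y ∈ closure ω, ∀ x₃ ∈ Set.Icc (-ε₀) ε₀,
      LinearIndependent ℝ
        ![pd 0 θ y + x₃ • pd 0 (nvec θ) y,
          pd 1 θ y + x₃ • pd 1 (nvec θ) y, nvec θ y] ∧
      0 < (Matrix.of fun i j : Fin 3 =>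
        ⟪![pd 0 θ y + x₃ • pd 0 (nvec θ) y,
            pd 1 θ y + x₃ • pd 1 (nvec θ) y, nvec θ y] i,
          ![pd 0 θ y + x₃ • pd 0 (nvec θ) y,
            pd 1 θ y + x₃ • pd 1 (nvec θ) y, nvec θ y] j⟫).det :=
  shell_covariant_basis_linear_independent_general ω hω_bdd θ U hU hclU hθ himm
end
end

section
/- Let G = (g^{ij}) be a symmetric positive definite real 3×3 matrix, and let λ ≥ 0 and μ > 0 be real numbers. Define the contravariant components of the three-dimensional elasticity tensor by A^{ijkl} := λ g^{ij} g^{kl} + μ (g^{ik} g^{jl} + g^{il} g^{jk}). Then A^{ijkl} = A^{jikl} = A^{klij} for all indices, and there exists a constant c > 0 such that for every symmetric real 3×3 matrix t = (t_{ij}): Σ_{i,j,k,l=1}^{3} A^{ijkl} t_{kl} t_{ij} ≥ c Σ_{i,j=1}^{3} t_{ij}². -/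
open scoped RealInnerProductSpace

noncomputable section

/-!
Contracting `A` with a symmetric `t` gives the stress `λ tr(Gt) G + 2μ GtG`, so the quadratic
form equals `λ tr(Gt)² + 2μ tr(GtGt)`. Writing `G = S²` with `S` the symmetric square root of `G`,
`tr(GtGt) = ‖StS‖²` in the Frobenius norm, and `t = S⁻¹ (StS) S⁻¹` gives
`‖t‖ ≤ ‖S⁻¹‖² ‖StS‖`; hence `c = 2μ ‖S⁻¹‖⁻⁴` works.
-/

open Matrix

variable {n : Type*}

def elasticityTensor (lam mu : ℝ) (G : Matrix n n ℝ) (i j k l : n) : ℝ :=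
  lam * G i j * G k l + mu * (G i k * G j l + G i l * G j k)

section Symmetries

variable {lam mu : ℝ} {G : Matrix n n ℝ}

theorem elasticityTensor_swap_left (hG : G.IsSymm) (i j k l : n) :
    elasticityTensor lam mu G i j k l = elasticityTensor lam mu G j i k l := by
  simp only [elasticityTensor, hG.apply i j]
  ring

theorem elasticityTensor_swap_pairs (hG : G.IsSymm) (i j k l : n) :
    elasticityTensor lam mu G i j k l = elasticityTensor lam mu G k l i j := by
  simp only [elasticityTensor, hG.apply i k, hG.apply j l, hG.apply i l, hG.apply j k]
  ring

end Symmetries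

variable [Fintype n]

theorem Matrix.sum_sum_mul_eq_trace_mul {X t : Matrix n n ℝ} (ht : t.IsSymm) :
    ∑ i, ∑ j, X i j * t i j = trace (X * t) := by
  simp only [trace, Matrix.diag, mul_apply, ht.apply]

theorem Matrix.trace_mul_self_eq_sum_sq {M : Matrix n n ℝ} (hM : M.IsSymm) :
    trace (M * M) = ∑ i, ∑ j, M i j ^ 2 := by
  simp only [← sum_sum_mul_eq_trace_mul hM, sq]

theorem Matrix.sum_sum_mul_mul_eq_mul_mul {G : Matrix n n ℝ} (hG : G.IsSymm) (t : Matrix n n ℝ)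
    (i j : n) : ∑ k, ∑ l, G i k * G j l * t k l = (G * t * G) i j := by
  simp only [mul_apply, Finset.sum_mul, hG.apply j]
  rw [Finset.sum_comm]
  exact Finset.sum_congr rfl fun _ _ => Finset.sum_congr rfl fun _ _ => by ring

theorem sum_elasticityTensor_mul {G t : Matrix n n ℝ} (hG : G.IsSymm) (ht : t.IsSymm)
    (lam mu : ℝ) (i j : n) :
    ∑ k, ∑ l, elasticityTensor lam mu G i j k l * t k l =
      ((lam * trace (G * t)) • G + (2 * mu) • (G * t * G)) i j := by
  have hswap : ∑ k, ∑ l, G i l * G j k * t k l = ∑ k, ∑ l, G i k * G j l * t k l := by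
    rw [Finset.sum_comm]
    simp only [ht.apply]
  have hsplit : ∑ k, ∑ l, elasticityTensor lam mu G i j k l * t k l =
      lam * G i j * ∑ k, ∑ l, G k l * t k l +
        mu * (∑ k, ∑ l, G i k * G j l * t k l + ∑ k, ∑ l, G i l * G j k * t k l) := by
    simp only [elasticityTensor, Finset.mul_sum, ← Finset.sum_add_distrib]
    exact Finset.sum_congr rfl fun _ _ => Finset.sum_congr rfl fun _ _ => by ring
  rw [hsplit, hswap, Matrix.add_apply, Matrix.smul_apply, Matrix.smul_apply, smul_eq_mul,
    smul_eq_mul, ← sum_sum_mul_eq_trace_mul ht, sum_sum_mul_mul_eq_mul_mul hG]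
  ring

theorem sum_elasticityTensor_mul_mul {G t : Matrix n n ℝ} (hG : G.IsSymm) (ht : t.IsSymm)
    (lam mu : ℝ) :
    ∑ i, ∑ j, ∑ k, ∑ l, elasticityTensor lam mu G i j k l * t k l * t i j =
      lam * trace (G * t) ^ 2 + 2 * mu * trace (G * t * (G * t)) := by
  simp only [← Finset.sum_mul, sum_elasticityTensor_mul hG ht, sum_sum_mul_eq_trace_mul ht,
    Matrix.add_mul, Matrix.smul_mul, trace_add, trace_smul, smul_eq_mul, Matrix.mul_assoc]
  ring

theorem Matrix.PosDef.exists_isSymm_isUnit_mul_self_eq [DecidableEq n] {G : Matrix n n ℝ}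
    (hG : G.PosDef) : ∃ S : Matrix n n ℝ, S.IsSymm ∧ IsUnit S ∧ S * S = G := by
  open scoped MatrixOrder in
  refine ⟨CFC.sqrt G, ?_, ?_, CFC.sqrt_mul_sqrt_self G hG.posSemidef.nonneg⟩
  · exact isHermitian_iff_isSymm.mp (CFC.sqrt_nonneg G).posSemidef.isHermitian
  · exact (CFC.isUnit_sqrt_iff G hG.posSemidef.nonneg).mpr hG.isUnit

section Frobenius

attribute [local instance] Matrix.frobeniusNormedAddCommGroup

theorem Matrix.frobenius_norm_sq_eq_sum_sq {m : Type*} [Fintype m] (X : Matrix m n ℝ) :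
    ‖X‖ ^ 2 = ∑ i, ∑ j, X i j ^ 2 := by
  rw [frobenius_norm_def, ← Real.rpow_natCast, ← Real.rpow_mul (by positivity)]
  norm_num

theorem Matrix.frobenius_norm_le_inv_sq_mul [DecidableEq n] {S : Matrix n n ℝ} (hS : IsUnit S)
    (t : Matrix n n ℝ) : ‖t‖ ≤ ‖S⁻¹‖ ^ 2 * ‖S * t * S‖ := by
  have hdet : IsUnit S.det := (isUnit_iff_isUnit_det S).mp hS
  calc ‖t‖ = ‖S⁻¹ * (S * t * S) * S⁻¹‖ := by
        rw [Matrix.mul_assoc, mul_nonsing_inv_cancel_right _ _ hdet,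
          nonsing_inv_mul_cancel_left (A := S) t hdet]
    _ ≤ ‖S⁻¹‖ * ‖S * t * S‖ * ‖S⁻¹‖ :=
        (frobenius_norm_mul _ _).trans
          (mul_le_mul_of_nonneg_right (frobenius_norm_mul _ _) (norm_nonneg _))
    _ = ‖S⁻¹‖ ^ 2 * ‖S * t * S‖ := by ring

theorem Matrix.PosDef.exists_pos_mul_sum_sq_le_trace [DecidableEq n] [Nonempty n]
    {G : Matrix n n ℝ} (hG : G.PosDef) :
    ∃ c > 0, ∀ t : Matrix n n ℝ, t.IsSymm →
      c * ∑ i, ∑ j, t i j ^ 2 ≤ trace (G * t * (G * t)) := by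
  obtain ⟨S, hSsymm, hS, rfl⟩ := hG.exists_isSymm_isUnit_mul_self_eq
  have hSinv : 0 < ‖S⁻¹‖ := norm_pos_iff.mpr (isUnit_nonsing_inv_iff.mpr hS).ne_zero
  refine ⟨(‖S⁻¹‖ ^ 4)⁻¹, by positivity, fun t ht => ?_⟩
  have hM : (S * t * S).IsSymm := by
    simp only [IsSymm, transpose_mul, hSsymm.eq, ht.eq, Matrix.mul_assoc]
  have htrace : trace (S * S * t * (S * S * t)) = trace (S * t * S * (S * t * S)) := by
    simp only [Matrix.mul_assoc]
    rw [trace_mul_comm S]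
    simp only [Matrix.mul_assoc]
  rw [htrace, trace_mul_self_eq_sum_sq hM, ← frobenius_norm_sq_eq_sum_sq,
    ← frobenius_norm_sq_eq_sum_sq]
  calc (‖S⁻¹‖ ^ 4)⁻¹ * ‖t‖ ^ 2 ≤ (‖S⁻¹‖ ^ 4)⁻¹ * (‖S⁻¹‖ ^ 2 * ‖S * t * S‖) ^ 2 := by
        gcongr
        exact frobenius_norm_le_inv_sq_mul hS t
    _ = ‖S * t * S‖ ^ 2 := by field_simp

end Frobenius

/-- the contravariant components
`A^{ijkl} = λ g^{ij} g^{kl} + μ (g^{ik} g^{jl} + g^{il} g^{jk})` of the three-dimensional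
elasticity tensor, built from a symmetric positive definite matrix `(g^{ij})` and Lamé
constants `λ ≥ 0`, `μ > 0`, satisfy the symmetries `A^{ijkl} = A^{jikl} = A^{klij}` and are
uniformly positive definite over symmetric matrices. -/
theorem elasticity_tensor_3d_symm_posdef
    (G : Matrix (Fin 3) (Fin 3) ℝ) (hG : G.PosDef)
    (lam mu : ℝ) (hlam : 0 ≤ lam) (hmu : 0 < mu)
    (A : Fin 3 → Fin 3 → Fin 3 → Fin 3 → ℝ)
    (hA : ∀ i j k l, A i j k l =
      lam * G i j * G k l + mu * (G i k * G j l + G i l * G j k)) :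
    (∀ i j k l, A i j k l = A j i k l ∧ A i j k l = A k l i j) ∧
    ∃ c : ℝ, 0 < c ∧ ∀ t : Matrix (Fin 3) (Fin 3) ℝ, t.IsSymm →
      c * ∑ i : Fin 3, ∑ j : Fin 3, (t i j) ^ 2 ≤
        ∑ i : Fin 3, ∑ j : Fin 3, ∑ k : Fin 3, ∑ l : Fin 3,
          A i j k l * t k l * t i j := by
  have hGs : G.IsSymm := isHermitian_iff_isSymm.mp hG.isHermitian
  obtain rfl : A = elasticityTensor lam mu G :=
    funext fun i => funext fun j => funext fun k => funext (hA i j k)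
  refine ⟨fun i j k l => ⟨elasticityTensor_swap_left hGs i j k l,
    elasticityTensor_swap_pairs hGs i j k l⟩, ?_⟩
  obtain ⟨c, hc, hbound⟩ := hG.exists_pos_mul_sum_sq_le_trace
  refine ⟨2 * mu * c, by positivity, fun t ht => ?_⟩
  rw [sum_elasticityTensor_mul_mul hGs ht]
  calc 2 * mu * c * ∑ i, ∑ j, t i j ^ 2 = 2 * mu * (c * ∑ i, ∑ j, t i j ^ 2) := by ring
    _ ≤ 2 * mu * trace (G * t * (G * t)) := by gcongr; exact hbound t ht
    _ ≤ lam * trace (G * t) ^ 2 + 2 * mu * trace (G * t * (G * t)) :=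
        le_add_of_nonneg_left (by positivity)
end
end
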